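/- Let X, Y be Banach spaces. The set Gen(X,Y) of all generating operators from X to Y is norm-closed in the space of bounded operators L(X,Y). -/

import Mathlib

/-!
If `‖F - G‖ ≤ ε` then `‖G x‖ ≥ ‖F x‖ - ε` on the unit ball, so the `δ`-slice
`{x ∈ B_X | ‖F x‖ > 1 - δ}` of `F` lies in the `(δ + ε)`-slice of `G`. Hence if `F` is generating,
the closed convex hull of each slice of `G` still exhausts the unit ball; the condition `‖G‖ = 1`
passes to limits by continuity of the norm.
-/

open Metric Set

section Generating

variable {X Y : Type*} [NormedAddCommGroup X] [NormedSpace ℝ X]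
  [NormedAddCommGroup Y] [NormedSpace ℝ Y]

def almostNormingSet (G : X →L[ℝ] Y) (δ : ℝ) : Set X :=
  {x | ‖x‖ ≤ 1 ∧ 1 - δ < ‖G x‖}

def IsGenerating (G : X →L[ℝ] Y) : Prop :=
  ‖G‖ = 1 ∧ ∀ δ > (0 : ℝ), closure (convexHull ℝ (almostNormingSet G δ)) = closedBall 0 1

theorem almostNormingSet_subset_closedBall (G : X →L[ℝ] Y) (δ : ℝ) :
    almostNormingSet G δ ⊆ closedBall 0 1 :=
  fun _ hx => mem_closedBall_zero_iff.mpr hx.1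

theorem closure_convexHull_almostNormingSet_subset (G : X →L[ℝ] Y) (δ : ℝ) :
    closure (convexHull ℝ (almostNormingSet G δ)) ⊆ closedBall 0 1 :=
  closure_minimal
    (convexHull_min (almostNormingSet_subset_closedBall G δ) (convex_closedBall 0 1))
    isClosed_closedBall

theorem almostNormingSet_subset_of_norm_sub_le {F G : X →L[ℝ] Y} {ε : ℝ} (hε : ‖F - G‖ ≤ ε)
    (δ : ℝ) : almostNormingSet F δ ⊆ almostNormingSet G (δ + ε) := by
  rintro x ⟨hx, hFx⟩
  refine ⟨hx, ?_⟩
  have hdiff : ‖F x‖ - ‖G x‖ ≤ ε * 1 :=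
    calc ‖F x‖ - ‖G x‖ ≤ ‖(F - G) x‖ := norm_sub_norm_le _ _
      _ ≤ ‖F - G‖ * ‖x‖ := (F - G).le_opNorm x
      _ ≤ ε * 1 := mul_le_mul hε hx (norm_nonneg x) ((norm_nonneg _).trans hε)
  linarith

theorem isClosed_setOf_isGenerating : IsClosed {G : X →L[ℝ] Y | IsGenerating G} := by
  refine isClosed_of_closure_subset fun G hG => ?_
  have approx : ∀ ε > 0, ∃ F : X →L[ℝ] Y, IsGenerating F ∧ ‖F - G‖ < ε := fun ε hε => by
    obtain ⟨F, hF, hFG⟩ := mem_closure_iff.mp hG ε hε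
    exact ⟨F, hF, by rwa [dist_comm, dist_eq_norm] at hFG⟩
  refine ⟨le_antisymm (le_of_forall_pos_lt_add fun ε hε => ?_)
    (le_of_forall_pos_lt_add fun ε hε => ?_), fun δ hδ => ?_⟩
  · obtain ⟨F, ⟨hF, -⟩, hFG⟩ := approx ε hε
    have := norm_sub_norm_le G F
    rw [norm_sub_rev] at this
    linarith
  · obtain ⟨F, ⟨hF, -⟩, hFG⟩ := approx ε hε
    have := norm_sub_norm_le F G
    linarith
  · obtain ⟨F, ⟨-, hF⟩, hFG⟩ := approx (δ / 2) (half_pos hδ)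
    refine (closure_convexHull_almostNormingSet_subset G δ).antisymm ?_
    rw [← hF (δ / 2) (half_pos hδ)]
    refine closure_mono (convexHull_mono ?_)
    simpa using almostNormingSet_subset_of_norm_sub_le hFG.le (δ / 2)

end Generating

theorem stmt18_general {X Y : Type*} [NormedAddCommGroup X] [NormedSpace ℝ X]
    [NormedAddCommGroup Y] [NormedSpace ℝ Y] :
    IsClosed {G : X →L[ℝ] Y | ‖G‖ = 1 ∧ ∀ δ > (0:ℝ),
      closure (convexHull ℝ {x : X | ‖x‖ ≤ 1 ∧ 1 - δ < ‖G x‖}) = Metric.closedBall (0:X) 1} :=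
  isClosed_setOf_isGenerating

theorem stmt18 {X Y : Type*} [NormedAddCommGroup X] [NormedSpace ℝ X] [CompleteSpace X]
    [NormedAddCommGroup Y] [NormedSpace ℝ Y] [CompleteSpace Y] :
    IsClosed {G : X →L[ℝ] Y | ‖G‖ = 1 ∧ ∀ δ > (0:ℝ),
      closure (convexHull ℝ {x : X | ‖x‖ ≤ 1 ∧ 1 - δ < ‖G x‖}) = Metric.closedBall (0:X) 1} :=
  stmt18_general
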